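/- Suppose ℓ > 1 and k < m < 2k with k ≥ 2. The map Ψ from fault-free tilings of an m×(kℓ) rectangle by k×1 and k×k tiles to fault-free tilings by only k×1 tiles, obtained by replacing each k×k tile with k stacked horizontal k×1 tiles, is well-defined and surjective, and every fiber of Ψ has cardinality 2^{ℓ−1}. -/

import Mathlib

/-- The cells of an `m × n` rectangle: `(row, column)` with `row < m`, `column < n`. -/
def grid (m n : ℕ) : Finset (ℕ × ℕ) := Finset.range m ×ˢ Finset.range n

/-- A horizontal `k × 1` tile: `k` consecutive cells in one row. -/
def IsHTile (k : ℕ) (t : Finset (ℕ × ℕ)) : Prop :=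
  ∃ i j : ℕ, t = (Finset.range k).image fun s => (i, j + s)

/-- A vertical `k × 1` tile: `k` consecutive cells in one column. -/
def IsVTile (k : ℕ) (t : Finset (ℕ × ℕ)) : Prop :=
  ∃ i j : ℕ, t = (Finset.range k).image fun s => (i + s, j)

/-- A tiling of the `m × n` rectangle by `k × 1` tiles. -/
def IsTiling (m n k : ℕ) (T : Finset (Finset (ℕ × ℕ))) : Prop :=
  (∀ t ∈ T, IsHTile k t ∨ IsVTile k t) ∧
  (T : Set (Finset (ℕ × ℕ))).PairwiseDisjoint id ∧
  T.biUnion id = grid m n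

/-- The number of tilings of the `m × n` rectangle by `k × 1` tiles. -/
noncomputable def numTilings (m n k : ℕ) : ℕ :=
  Nat.card {T : Finset (Finset (ℕ × ℕ)) // IsTiling m n k T}

/-- The tiling `T` has a fault at `x = a`: every tile lies entirely in
columns `< a` or entirely in columns `≥ a`. -/
def HasFaultAt (T : Finset (Finset (ℕ × ℕ))) (a : ℕ) : Prop :=
  ∀ t ∈ T, (∀ c ∈ t, c.2 < a) ∨ (∀ c ∈ t, a ≤ c.2)

/-- A tiling of a rectangle with `n` columns is fault-free. -/
def FaultFree (n : ℕ) (T : Finset (Finset (ℕ × ℕ))) : Prop :=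
  ∀ a : ℕ, 0 < a → a < n → ¬ HasFaultAt T a

/-- The number of fault-free tilings of the `m × n` rectangle by `k × 1` tiles. -/
noncomputable def numFFTilings (m n k : ℕ) : ℕ :=
  Nat.card {T : Finset (Finset (ℕ × ℕ)) // IsTiling m n k T ∧ FaultFree n T}

/-- A `k × k` square tile. -/
def IsSqTile (k : ℕ) (t : Finset (ℕ × ℕ)) : Prop :=
  ∃ i j : ℕ, t = (Finset.range k ×ˢ Finset.range k).image fun p => (i + p.1, j + p.2)

/-- A tiling of the `m × n` rectangle by `k × 1` and `k × k` tiles. -/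
def IsTiling' (m n k : ℕ) (T : Finset (Finset (ℕ × ℕ))) : Prop :=
  (∀ t ∈ T, IsHTile k t ∨ IsVTile k t ∨ IsSqTile k t) ∧
  (T : Set (Finset (ℕ × ℕ))).PairwiseDisjoint id ∧
  T.biUnion id = grid m n

/-- The number of fault-free tilings of the `m × n` rectangle by `k × 1` and `k × k` tiles. -/
noncomputable def numFFTilings' (m n k : ℕ) : ℕ :=
  Nat.card {T : Finset (Finset (ℕ × ℕ)) // IsTiling' m n k T ∧ FaultFree n T}

open Classical in
/-- Replace each `k × k` square tile of `T` by `k` stacked horizontal `k × 1` tiles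
(its rows), leaving all `k × 1` tiles unchanged. -/
noncomputable def psi (k : ℕ) (T : Finset (Finset (ℕ × ℕ))) : Finset (Finset (ℕ × ℕ)) :=
  T.biUnion fun t =>
    if IsSqTile k t then (t.image Prod.fst).image fun i => t.filter fun c => c.1 = i
    else {t}

section Basic
variable {k m n : ℕ}

/-- horizontal tile -/
def Ht (k i j : ℕ) : Finset (ℕ × ℕ) := (Finset.range k).image fun s => (i, j + s)
/-- vertical tile -/
def Vt (k i j : ℕ) : Finset (ℕ × ℕ) := (Finset.range k).image fun s => (i + s, j)
/-- square tile -/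
def Qt (k i j : ℕ) : Finset (ℕ × ℕ) :=
  (Finset.range k ×ˢ Finset.range k).image fun p => (i + p.1, j + p.2)

lemma mem_Ht {i j : ℕ} {z : ℕ × ℕ} : z ∈ Ht k i j ↔ z.1 = i ∧ j ≤ z.2 ∧ z.2 < j + k := by
  simp only [Ht, Finset.mem_image, Finset.mem_range]
  constructor
  · rintro ⟨s, hs, rfl⟩; exact ⟨rfl, by omega, by omega⟩
  · rintro ⟨h1, h2, h3⟩; exact ⟨z.2 - j, by omega, by rw [← h1]; ext <;> simp <;> omega⟩

lemma mem_Vt {i j : ℕ} {z : ℕ × ℕ} : z ∈ Vt k i j ↔ z.2 = j ∧ i ≤ z.1 ∧ z.1 < i + k := by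
  simp only [Vt, Finset.mem_image, Finset.mem_range]
  constructor
  · rintro ⟨s, hs, rfl⟩; exact ⟨rfl, by omega, by omega⟩
  · rintro ⟨h1, h2, h3⟩; exact ⟨z.1 - i, by omega, by rw [← h1]; ext <;> simp <;> omega⟩

lemma mem_Qt {i j : ℕ} {z : ℕ × ℕ} :
    z ∈ Qt k i j ↔ (i ≤ z.1 ∧ z.1 < i + k) ∧ (j ≤ z.2 ∧ z.2 < j + k) := by
  simp only [Qt, Finset.mem_image, Finset.mem_product, Finset.mem_range, Prod.exists]
  constructor
  · rintro ⟨a, b, ⟨ha, hb⟩, rfl⟩; exact ⟨⟨by omega, by omega⟩, by omega, by omega⟩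
  · rintro ⟨⟨h1, h2⟩, h3, h4⟩
    exact ⟨z.1 - i, z.2 - j, ⟨by omega, by omega⟩, by ext <;> simp <;> omega⟩

lemma mem_grid {z : ℕ × ℕ} : z ∈ grid m n ↔ z.1 < m ∧ z.2 < n := by
  simp [grid]

lemma isHTile_iff {t : Finset (ℕ × ℕ)} : IsHTile k t ↔ ∃ i j, t = Ht k i j := Iff.rfl
lemma isVTile_iff {t : Finset (ℕ × ℕ)} : IsVTile k t ↔ ∃ i j, t = Vt k i j := Iff.rfl
lemma isSqTile_iff {t : Finset (ℕ × ℕ)} : IsSqTile k t ↔ ∃ i j, t = Qt k i j := Iff.rfl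

lemma Ht_ne_Vt (hk : 2 ≤ k) (i j i' j' : ℕ) : Ht k i j ≠ Vt k i' j' := by
  intro h
  have h1 : ((i, j) : ℕ × ℕ) ∈ Ht k i j := mem_Ht.2 ⟨rfl, le_rfl, by omega⟩
  have h2 : ((i, j + 1) : ℕ × ℕ) ∈ Ht k i j := mem_Ht.2 ⟨rfl, by omega, by omega⟩
  rw [h] at h1 h2
  have := (mem_Vt.1 h1).1; have := (mem_Vt.1 h2).1
  omega

lemma Ht_inj (hk : 0 < k) {i j i' j' : ℕ} (h : Ht k i j = Ht k i' j') : i = i' ∧ j = j' := by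
  have h1 : ((i, j) : ℕ × ℕ) ∈ Ht k i' j' := h ▸ mem_Ht.2 ⟨rfl, le_rfl, by omega⟩
  have h2 : ((i', j') : ℕ × ℕ) ∈ Ht k i j := h ▸ mem_Ht.2 ⟨rfl, le_rfl, by omega⟩
  rw [mem_Ht] at h1 h2
  exact ⟨h1.1, by omega⟩

lemma Vt_inj (hk : 0 < k) {i j i' j' : ℕ} (h : Vt k i j = Vt k i' j') : i = i' ∧ j = j' := by
  have h1 : ((i, j) : ℕ × ℕ) ∈ Vt k i' j' := h ▸ mem_Vt.2 ⟨rfl, le_rfl, by omega⟩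
  have h2 : ((i', j') : ℕ × ℕ) ∈ Vt k i j := h ▸ mem_Vt.2 ⟨rfl, le_rfl, by omega⟩
  rw [mem_Vt] at h1 h2
  exact ⟨by omega, h1.1⟩

lemma Qt_inj (hk : 0 < k) {i j i' j' : ℕ} (h : Qt k i j = Qt k i' j') : i = i' ∧ j = j' := by
  have h1 : ((i, j) : ℕ × ℕ) ∈ Qt k i' j' := h ▸ mem_Qt.2 ⟨⟨le_rfl, by omega⟩, le_rfl, by omega⟩
  have h2 : ((i', j') : ℕ × ℕ) ∈ Qt k i j := h ▸ mem_Qt.2 ⟨⟨le_rfl, by omega⟩, le_rfl, by omega⟩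
  rw [mem_Qt] at h1 h2
  omega

lemma card_Ht (i j : ℕ) : (Ht k i j).card = k := by
  rw [Ht, Finset.card_image_of_injective _ (fun a b h => by simpa using h), Finset.card_range]

lemma card_Vt (i j : ℕ) : (Vt k i j).card = k := by
  rw [Vt, Finset.card_image_of_injective _ (fun a b h => by simpa using h), Finset.card_range]

lemma card_Qt (i j : ℕ) : (Qt k i j).card = k * k := by
  rw [Qt, Finset.card_image_of_injective, Finset.card_product, Finset.card_range]
  rintro ⟨a, b⟩ ⟨a', b'⟩ h
  simp only [Prod.mk.injEq] at h ⊢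
  omega

lemma Qt_ne_Ht (hk : 2 ≤ k) (i j i' j' : ℕ) : Qt k i j ≠ Ht k i' j' := by
  intro h
  have := card_Qt (k := k) i j
  rw [h, card_Ht] at this
  nlinarith

lemma Qt_ne_Vt (hk : 2 ≤ k) (i j i' j' : ℕ) : Qt k i j ≠ Vt k i' j' := by
  intro h
  have := card_Qt (k := k) i j
  rw [h, card_Vt] at this
  nlinarith

lemma Ht_subset_Qt {i j s : ℕ} (hs : s < k) : Ht k (i + s) j ⊆ Qt k i j := by
  intro z hz
  rw [mem_Ht] at hz
  exact mem_Qt.2 ⟨⟨by omega, by omega⟩, hz.2⟩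

end Basic
section TilingHelpers
variable {k m n : ℕ} {T : Finset (Finset (ℕ × ℕ))}

lemma uniq_tile (hd : (T : Set (Finset (ℕ × ℕ))).PairwiseDisjoint id)
    {t u : Finset (ℕ × ℕ)} (ht : t ∈ T) (hu : u ∈ T) {z : ℕ × ℕ}
    (hzt : z ∈ t) (hzu : z ∈ u) : t = u := by
  by_contra hne
  have := hd ht hu hne
  exact (Finset.disjoint_left.1 this) hzt hzu

lemma tile_subset_grid (hT : T.biUnion id = grid m n) {t : Finset (ℕ × ℕ)} (ht : t ∈ T) :
    t ⊆ grid m n := by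
  intro z hz
  rw [← hT]
  exact Finset.mem_biUnion.2 ⟨t, ht, hz⟩

lemma exists_tile (hT : T.biUnion id = grid m n) {z : ℕ × ℕ} (hz : z ∈ grid m n) :
    ∃ t ∈ T, z ∈ t := by
  rw [← hT] at hz
  exact Finset.mem_biUnion.1 hz

lemma card_tile (hT : IsTiling m n k T) {t : Finset (ℕ × ℕ)} (ht : t ∈ T) : t.card = k := by
  rcases hT.1 t ht with ⟨i, j, rfl⟩ | ⟨i, j, rfl⟩
  · exact card_Ht i j
  · exact card_Vt i j

lemma Vt_row_bound (hT : T.biUnion id = grid m n) (hk : 0 < k) {i j : ℕ}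
    (ht : Vt k i j ∈ T) : i + k ≤ m ∧ j < n := by
  have : ((i + (k - 1), j) : ℕ × ℕ) ∈ Vt k i j := mem_Vt.2 ⟨rfl, by omega, by omega⟩
  have := tile_subset_grid hT ht this
  rw [mem_grid] at this
  exact ⟨by omega, this.2⟩

lemma Ht_col_bound (hT : T.biUnion id = grid m n) (hk : 0 < k) {i j : ℕ}
    (ht : Ht k i j ∈ T) : i < m ∧ j + k ≤ n := by
  have : ((i, j + (k - 1)) : ℕ × ℕ) ∈ Ht k i j := mem_Ht.2 ⟨rfl, by omega, by omega⟩
  have := tile_subset_grid hT ht this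
  rw [mem_grid] at this
  exact ⟨this.1, by omega⟩

/-- every vertical tile of a tiling of an m×n grid with k ≤ m < 2k contains the
cell in row k-1 of its column. -/
lemma Vt_mem_middle (hT : T.biUnion id = grid m n) (hk : 0 < k) (h2 : m < 2 * k)
    {i j : ℕ} (ht : Vt k i j ∈ T) : ((k - 1, j) : ℕ × ℕ) ∈ Vt k i j := by
  have hb := (Vt_row_bound hT hk ht).1
  exact mem_Vt.2 ⟨rfl, by omega, by omega⟩

/-- in a fault-free tiling, every interior line is crossed by some tile -/
lemma ff_crossing {T : Finset (Finset (ℕ × ℕ))} (hFF : FaultFree n T) {a : ℕ}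
    (ha0 : 0 < a) (han : a < n) :
    ∃ t ∈ T, (∃ z ∈ t, a ≤ z.2) ∧ (∃ z ∈ t, z.2 < a) := by
  have := hFF a ha0 han
  rw [HasFaultAt] at this
  push_neg at this
  obtain ⟨t, ht, h1, h2⟩ := this
  obtain ⟨z1, hz1, hz1'⟩ := h1
  exact ⟨t, ht, ⟨z1, hz1, by omega⟩, h2⟩

/-- a crossing horizontal tile -/
lemma ff_crossing_Ht (hT : IsTiling m n k T) (hFF : FaultFree n T) (hk : 0 < k) {a : ℕ}
    (ha0 : 0 < a) (han : a < n) :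
    ∃ i j, Ht k i j ∈ T ∧ j < a ∧ a < j + k := by
  obtain ⟨t, ht, ⟨z1, hz1, hz1'⟩, ⟨z2, hz2, hz2'⟩⟩ := ff_crossing hFF ha0 han
  rcases hT.1 t ht with ⟨i, j, rfl⟩ | ⟨i, j, rfl⟩
  · refine ⟨i, j, ht, ?_, ?_⟩
    · have := mem_Ht.1 hz2; omega
    · have := mem_Ht.1 hz1; omega
  · have := mem_Vt.1 hz1; have := mem_Vt.1 hz2; omega

lemma not_fault_of_crossing {T : Finset (Finset (ℕ × ℕ))} {a : ℕ}
    {t : Finset (ℕ × ℕ)} (ht : t ∈ T) (h1 : ∃ z ∈ t, a ≤ z.2) (h2 : ∃ z ∈ t, z.2 < a) :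
    ¬ HasFaultAt T a := by
  intro hf
  rcases hf t ht with h | h
  · obtain ⟨z, hz, hz'⟩ := h1; exact absurd (h z hz) (by omega)
  · obtain ⟨z, hz, hz'⟩ := h2; exact absurd (h z hz) (by omega)

end TilingHelpers
section Structure
variable {k m n : ℕ}

/-- positions of blocks: `(i,j)` such that rows `i..i+k-1` all carry the horizontal
tile with columns `j..j+k-1`. -/
def blockPos (k m n : ℕ) (T : Finset (Finset (ℕ × ℕ))) : Finset (ℕ × ℕ) :=
  (grid m n).filter fun p => ∀ s ∈ Finset.range k, Ht k (p.1 + s) p.2 ∈ T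

lemma mem_blockPos {T : Finset (Finset (ℕ × ℕ))} {p : ℕ × ℕ} :
    p ∈ blockPos k m n T ↔ p ∈ grid m n ∧ ∀ s < k, Ht k (p.1 + s) p.2 ∈ T := by
  simp [blockPos]

lemma exists_outside_row (h1 : k < m) {i0 : ℕ} (hi0 : i0 + k ≤ m) :
    ∃ ρ, ρ < m ∧ (ρ < i0 ∨ i0 + k ≤ ρ) := by
  rcases Nat.eq_zero_or_pos i0 with h | h
  · exact ⟨k, by omega, by omega⟩
  · exact ⟨0, by omega, by omega⟩

lemma vert_same_col {T : Finset (Finset (ℕ × ℕ))} (hT : IsTiling m n k T)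
    (hk0 : 0 < k) (h2 : m < 2 * k) {i i' j : ℕ}
    (h : Vt k i j ∈ T) (h' : Vt k i' j ∈ T) : i = i' := by
  have hm := Vt_mem_middle hT.2.2 hk0 h2 h
  have hm' := Vt_mem_middle hT.2.2 hk0 h2 h'
  exact (Vt_inj hk0 (uniq_tile hT.2.1 h h' hm hm')).1

lemma outside_rows_H0 {T : Finset (Finset (ℕ × ℕ))} (hT : IsTiling m n k T)
    (hk : 2 ≤ k) (h2 : m < 2 * k) (hkn : k ≤ n) {i0 : ℕ} (hV0 : Vt k i0 0 ∈ T) :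
    ∀ ρ, ρ < m → (ρ < i0 ∨ i0 + k ≤ ρ) → Ht k ρ 0 ∈ T := by
  intro ρ hρm hout
  have hz : ((ρ, 0) : ℕ × ℕ) ∈ grid m n := mem_grid.2 ⟨hρm, by omega⟩
  obtain ⟨t, ht, hzt⟩ := exists_tile hT.2.2 hz
  rcases hT.1 t ht with ⟨i, j, rfl⟩ | ⟨i, j, rfl⟩
  · have hm := mem_Ht.1 hzt
    simp only at hm
    obtain ⟨rfl, hj, _⟩ := hm
    have : j = 0 := by omega
    subst this; exact ht
  · have hm := mem_Vt.1 hzt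
    simp only at hm
    obtain ⟨rfl, hi1, hi2⟩ := hm
    have : i = i0 := vert_same_col hT (by omega) h2 ht hV0
    omega

lemma vert_low_col {T : Finset (Finset (ℕ × ℕ))} (hT : IsTiling m n k T)
    (hk : 2 ≤ k) (h1 : k < m) (h2 : m < 2 * k) (hkn : k ≤ n) {i0 : ℕ}
    (hV0 : Vt k i0 0 ∈ T) {i1 x : ℕ} (hx : x < k) (hv : Vt k i1 x ∈ T) : i1 = i0 := by
  by_contra hne
  have hi1 : i1 + k ≤ m := (Vt_row_bound hT.2.2 (by omega) hv).1
  have hi0 : i0 + k ≤ m := (Vt_row_bound hT.2.2 (by omega) hV0).1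
  have hH0 := outside_rows_H0 hT hk h2 hkn hV0
  -- pick an outside row inside [i1, i1+k)
  obtain ⟨ρ, hρ1, hρ2, hρm, hρout⟩ :
      ∃ ρ, i1 ≤ ρ ∧ ρ < i1 + k ∧ ρ < m ∧ (ρ < i0 ∨ i0 + k ≤ ρ) := by
    rcases Nat.lt_or_ge i1 i0 with h | h
    · exact ⟨i1, le_rfl, by omega, by omega, by omega⟩
    · exact ⟨i1 + k - 1, by omega, by omega, by omega, by omega⟩
  have h1' : ((ρ, x) : ℕ × ℕ) ∈ Vt k i1 x := mem_Vt.2 ⟨rfl, hρ1, hρ2⟩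
  have h2' : ((ρ, x) : ℕ × ℕ) ∈ Ht k ρ 0 := mem_Ht.2 ⟨rfl, by omega, by omega⟩
  exact Ht_ne_Vt hk ρ 0 i1 x (uniq_tile hT.2.1 (hH0 ρ hρm hρout) hv h2' h1')

end Structure
section Shift
variable {k : ℕ}

def shiftT (k : ℕ) (t : Finset (ℕ × ℕ)) : Finset (ℕ × ℕ) :=
  t.image fun z => (z.1, z.2 - k)

lemma mem_shiftT {t : Finset (ℕ × ℕ)} (ht : ∀ z ∈ t, k ≤ z.2) {z : ℕ × ℕ} :
    z ∈ shiftT k t ↔ ((z.1, z.2 + k) : ℕ × ℕ) ∈ t := by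
  constructor
  · rintro hz
    obtain ⟨w, hw, hwz⟩ := Finset.mem_image.1 hz
    have := ht w hw
    have : (z.1, z.2 + k) = w := by
      rw [← hwz]; ext <;> simp <;> omega
    rwa [this]
  · intro hz
    exact Finset.mem_image.2 ⟨(z.1, z.2 + k), hz, by ext <;> simp⟩

lemma shiftT_Ht {i x : ℕ} (hx : k ≤ x) : shiftT k (Ht k i x) = Ht k i (x - k) := by
  ext z
  rw [mem_shiftT (fun z hz => by have := mem_Ht.1 hz; omega), mem_Ht, mem_Ht]
  simp only
  omega

lemma shiftT_Vt {i x : ℕ} (hx : k ≤ x) : shiftT k (Vt k i x) = Vt k i (x - k) := by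
  ext z
  rw [mem_shiftT (fun z hz => by have := mem_Vt.1 hz; omega), mem_Vt, mem_Vt]
  simp only
  omega

lemma shiftT_eq_Ht {t : Finset (ℕ × ℕ)} (ht : ∀ z ∈ t, k ≤ z.2) {ρ y : ℕ}
    (he : shiftT k t = Ht k ρ y) : t = Ht k ρ (y + k) := by
  ext z
  constructor
  · intro hz
    have hzk := ht z hz
    have : ((z.1, z.2 - k) : ℕ × ℕ) ∈ shiftT k t := Finset.mem_image.2 ⟨z, hz, rfl⟩
    rw [he, mem_Ht] at this
    rw [mem_Ht]
    simp only at this ⊢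
    omega
  · intro hz
    rw [mem_Ht] at hz
    have : ((z.1, z.2 - k) : ℕ × ℕ) ∈ Ht k ρ y := by
      rw [mem_Ht]; simp only; omega
    rw [← he, mem_shiftT ht] at this
    have hzz : (( (z.1, z.2 - k).1, (z.1, z.2 - k).2 + k) : ℕ × ℕ) = z := by
      ext <;> simp <;> omega
    rwa [hzz] at this

lemma shiftT_disjoint {t u : Finset (ℕ × ℕ)} (ht : ∀ z ∈ t, k ≤ z.2)
    (hu : ∀ z ∈ u, k ≤ z.2) (h : Disjoint t u) : Disjoint (shiftT k t) (shiftT k u) := by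
  rw [Finset.disjoint_left] at h ⊢
  intro z hz hz'
  rw [mem_shiftT ht] at hz
  rw [mem_shiftT hu] at hz'
  exact h hz hz'

end Shift
lemma structure_main (k m : ℕ) (hk : 2 ≤ k) (h1 : k < m) (h2 : m < 2 * k) :
    ∀ l : ℕ, ∀ T' : Finset (Finset (ℕ × ℕ)), IsTiling m (k * (l + 1)) k T' →
      FaultFree (k * (l + 1)) T' → (∃ i0, Vt k i0 0 ∈ T') →
      (blockPos k m (k * (l + 1)) T').card = l ∧
      (∀ p ∈ blockPos k m (k * (l + 1)) T', ∀ q ∈ blockPos k m (k * (l + 1)) T',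
        p ≠ q → p.2 + k ≤ q.2 ∨ q.2 + k ≤ p.2) := by
  intro l
  induction l with
  | zero =>
    intro T' hT hFF hex
    obtain ⟨i0, hV0⟩ := hex
    have hk0 : 0 < k := by omega
    have hn : k * (0 + 1) = k := by ring
    have hkn : k ≤ k * (0 + 1) := by omega
    have hi0 : i0 + k ≤ m := (Vt_row_bound hT.2.2 hk0 hV0).1
    have hH0 := outside_rows_H0 hT hk h2 hkn hV0
    have hempty : blockPos k m (k * (0 + 1)) T' = ∅ := by
      rw [Finset.eq_empty_iff_forall_notMem]
      rintro ⟨i, j⟩ hp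
      rw [mem_blockPos] at hp
      obtain ⟨hpg, hrows⟩ := hp
      -- j = 0 since tiles fit in width k
      have hhb := Ht_col_bound hT.2.2 hk0 (hrows 0 (by omega))
      have hj0 : j = 0 := by simp only at hhb; omega
      subst hj0
      have hik : i + k ≤ m := by
        have := (Ht_col_bound hT.2.2 hk0 (hrows (k - 1) (by omega))).1
        omega
      -- inside row
      set ρ := max i i0 with hρ
      have hin1 : i0 ≤ ρ := le_max_right _ _
      have hin2 : ρ < i0 + k := by omega
      have hri : i ≤ ρ ∧ ρ < i + k := by omega
      have hHρ : Ht k ρ 0 ∈ T' := by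
        have := hrows (ρ - i) (by omega)
        simpa [Nat.add_sub_cancel' hri.1] using this
      have hz1 : ((ρ, 0) : ℕ × ℕ) ∈ Ht k ρ 0 := mem_Ht.2 ⟨rfl, le_rfl, by omega⟩
      have hz2 : ((ρ, 0) : ℕ × ℕ) ∈ Vt k i0 0 := mem_Vt.2 ⟨rfl, hin1, hin2⟩
      exact Ht_ne_Vt hk ρ 0 i0 0 (uniq_tile hT.2.1 hHρ hV0 hz1 hz2)
    rw [hempty]
    simp
  | succ l ih =>
    intro T' hT hFF hex
    obtain ⟨i0, hV0⟩ := hex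
    have hk0 : 0 < k := by omega
    have hn : k * (l + 1 + 1) = k * l + k + k := by ring
    have hn' : k * (l + 1) = k * l + k := by ring
    have hkn : k ≤ k * (l + 1 + 1) := by omega
    have hi0 : i0 + k ≤ m := (Vt_row_bound hT.2.2 hk0 hV0).1
    have hH0 := outside_rows_H0 hT hk h2 hkn hV0
    have hHV : ∀ t ∈ T', (∃ i x, t = Ht k i x) ∨ ∃ i x, t = Vt k i x := hT.1
    -- least column with no vertical of start i0
    have hcex : ∃ j, Vt k i0 j ∉ T' := by
      refine ⟨k * (l + 1 + 1), fun h => ?_⟩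
      have := (Vt_row_bound hT.2.2 hk0 h).2
      omega
    set c := Nat.find hcex with hcdef
    have hVc : Vt k i0 c ∉ T' := Nat.find_spec hcex
    have hVlt : ∀ j < c, Vt k i0 j ∈ T' := by
      intro j hj
      by_contra h
      have : c ≤ j := Nat.find_le h
      omega
    have hc0 : 0 < c := by
      rcases Nat.eq_zero_or_pos c with h | h
      · rw [h] at hVc; exact absurd hV0 hVc
      · exact h
    have hck : c < k := by
      by_contra hge
      obtain ⟨i, j, hH, hj1, hj2⟩ := ff_crossing_Ht hT hFF hk0 (a := k) hk0 (by omega)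
      have him : i < m := (Ht_col_bound hT.2.2 hk0 hH).1
      have hzc : ((i, k - 1) : ℕ × ℕ) ∈ Ht k i j := mem_Ht.2 ⟨rfl, by omega, by omega⟩
      by_cases hin : i0 ≤ i ∧ i < i0 + k
      · have hv : Vt k i0 (k - 1) ∈ T' := hVlt _ (by omega)
        have hzv : ((i, k - 1) : ℕ × ℕ) ∈ Vt k i0 (k - 1) :=
          mem_Vt.2 ⟨rfl, hin.1, hin.2⟩
        exact Ht_ne_Vt hk i j i0 (k - 1) (uniq_tile hT.2.1 hH hv hzc hzv)
      · have hout : i < i0 ∨ i0 + k ≤ i := by omega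
        have hH0i := hH0 i him hout
        have hz0 : ((i, k - 1) : ℕ × ℕ) ∈ Ht k i 0 := mem_Ht.2 ⟨rfl, by omega, by omega⟩
        have := (Ht_inj hk0 (uniq_tile hT.2.1 hH hH0i hzc hz0)).2
        omega
    -- block tiles at rows i0..i0+k-1
    have hB : ∀ ρ, i0 ≤ ρ → ρ < i0 + k → Ht k ρ c ∈ T' := by
      intro ρ hρ1 hρ2
      have hz : ((ρ, c) : ℕ × ℕ) ∈ grid m (k * (l + 1 + 1)) :=
        mem_grid.2 ⟨by omega, by omega⟩
      obtain ⟨t, ht, hzt⟩ := exists_tile hT.2.2 hz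
      rcases hT.1 t ht with ⟨i, x, rfl⟩ | ⟨i, x, rfl⟩
      · have hm := mem_Ht.1 hzt
        simp only at hm
        obtain ⟨rfl, hx1, hx2⟩ := hm
        rcases Nat.lt_or_ge x c with hlt | hge
        · exfalso
          have hv : Vt k i0 x ∈ T' := hVlt _ hlt
          have hz1 : ((ρ, x) : ℕ × ℕ) ∈ Ht k ρ x := mem_Ht.2 ⟨rfl, le_rfl, by omega⟩
          have hz2 : ((ρ, x) : ℕ × ℕ) ∈ Vt k i0 x := mem_Vt.2 ⟨rfl, hρ1, hρ2⟩
          exact Ht_ne_Vt hk ρ x i0 x (uniq_tile hT.2.1 ht hv hz1 hz2)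
        · have : x = c := by omega
          subst this; exact ht
      · exfalso
        have hm := mem_Vt.1 hzt
        simp only at hm
        obtain ⟨rfl, hi1, hi2⟩ := hm
        have : i = i0 := vert_low_col hT hk h1 h2 hkn hV0 hck ht
        subst this
        exact hVc ht
    -- coverage of inside rows, columns < c + k
    have hcovIn : ∀ ρ x, i0 ≤ ρ → ρ < i0 + k → x < c + k → ∀ t ∈ T', ((ρ, x) : ℕ × ℕ) ∈ t →
        (x < c ∧ t = Vt k i0 x) ∨ (c ≤ x ∧ t = Ht k ρ c) := by
      intro ρ x hρ1 hρ2 hx t ht hzt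
      rcases Nat.lt_or_ge x c with hlt | hge
      · left
        refine ⟨hlt, uniq_tile hT.2.1 ht (hVlt _ hlt) hzt (mem_Vt.2 ⟨rfl, hρ1, hρ2⟩)⟩
      · right
        refine ⟨hge, uniq_tile hT.2.1 ht (hB ρ hρ1 hρ2) hzt (mem_Ht.2 ⟨rfl, hge, by omega⟩)⟩
    -- coverage of outside rows, columns < k
    have hcovOut : ∀ ρ x, ρ < m → (ρ < i0 ∨ i0 + k ≤ ρ) → x < k → ∀ t ∈ T',
        ((ρ, x) : ℕ × ℕ) ∈ t → t = Ht k ρ 0 := by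
      intro ρ x hρm hout hx t ht hzt
      exact uniq_tile hT.2.1 ht (hH0 ρ hρm hout) hzt (mem_Ht.2 ⟨rfl, by omega, by omega⟩)
    -- classification of tiles touching columns < k
    have hrem : ∀ t ∈ T', (∃ z ∈ t, z.2 < k) →
        (∃ ρ, ρ < m ∧ (ρ < i0 ∨ i0 + k ≤ ρ) ∧ t = Ht k ρ 0) ∨
        (∃ x, x < c ∧ t = Vt k i0 x) ∨
        (∃ ρ, i0 ≤ ρ ∧ ρ < i0 + k ∧ t = Ht k ρ c) := by
      intro t ht ⟨z, hz, hzk⟩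
      have hzg := tile_subset_grid hT.2.2 ht hz
      rw [mem_grid] at hzg
      have hzz : ((z.1, z.2) : ℕ × ℕ) = z := by ext <;> simp
      by_cases hin : i0 ≤ z.1 ∧ z.1 < i0 + k
      · rcases hcovIn z.1 z.2 hin.1 hin.2 (by omega) t ht (by rwa [hzz]) with ⟨hx, rfl⟩ | ⟨hx, rfl⟩
        · right; left; exact ⟨z.2, hx, rfl⟩
        · right; right; exact ⟨z.1, hin.1, hin.2, rfl⟩
      · have := hcovOut z.1 z.2 hzg.1 (by omega) hzk t ht (by rwa [hzz])
        left; exact ⟨z.1, hzg.1, by omega, this⟩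
    -- the peeled tiling
    set T2 := (T'.filter fun t => ∀ z ∈ t, k ≤ z.2).image (shiftT k) ∪
        (Finset.range c).image (fun j => Vt k i0 j) with hT2def
    have hmem2 : ∀ u, u ∈ T2 ↔
        (∃ t ∈ T', (∀ z ∈ t, k ≤ z.2) ∧ u = shiftT k t) ∨ (∃ j, j < c ∧ u = Vt k i0 j) := by
      intro u
      simp only [hT2def, Finset.mem_union, Finset.mem_image, Finset.mem_filter,
        Finset.mem_range]
      constructor
      · rintro (⟨t, ⟨ht, hcol⟩, rfl⟩ | ⟨j, hj, rfl⟩)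
        · exact Or.inl ⟨t, ht, hcol, rfl⟩
        · exact Or.inr ⟨j, hj, rfl⟩
      · rintro (⟨t, ht, hcol, rfl⟩ | ⟨j, hj, rfl⟩)
        · exact Or.inl ⟨t, ⟨ht, hcol⟩, rfl⟩
        · exact Or.inr ⟨j, hj, rfl⟩
    have hT2til : IsTiling m (k * (l + 1)) k T2 := by
      refine ⟨?_, ?_, ?_⟩
      · intro u hu
        rcases (hmem2 u).1 hu with ⟨t, ht, hcol, rfl⟩ | ⟨j, hj, rfl⟩
        · rcases hHV t ht with ⟨i, x, rfl⟩ | ⟨i, x, rfl⟩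
          · have hx : k ≤ x := hcol (i, x) (mem_Ht.2 ⟨rfl, le_rfl, by omega⟩)
            rw [shiftT_Ht hx]
            exact Or.inl ⟨i, x - k, rfl⟩
          · have hx : k ≤ x := hcol (i, x) (mem_Vt.2 ⟨rfl, le_rfl, by omega⟩)
            rw [shiftT_Vt hx]
            exact Or.inr ⟨i, x - k, rfl⟩
        · exact Or.inr ⟨i0, j, rfl⟩
      · intro u hu v hv huv
        simp only [Function.onFun, id] at *
        rcases (hmem2 u).1 hu with ⟨t, ht, hcol, rfl⟩ | ⟨j, hj, rfl⟩ <;>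
          rcases (hmem2 v).1 hv with ⟨t', ht', hcol', rfl⟩ | ⟨j', hj', rfl⟩
        · have hne : t ≠ t' := fun h => huv (by rw [h])
          exact shiftT_disjoint hcol hcol' (hT.2.1 ht ht' hne)
        · rw [Finset.disjoint_left]
          intro z hz hz'
          rw [mem_shiftT hcol] at hz
          have hv2 := mem_Vt.1 hz'
          rcases hcovIn z.1 (z.2 + k) hv2.2.1 hv2.2.2 (by omega) t ht hz with
            ⟨hx, rfl⟩ | ⟨hx, rfl⟩
          · omega
          · have := hcol (z.1, c) (mem_Ht.2 ⟨rfl, le_rfl, by omega⟩)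
            simp only at this
            omega
        · rw [Finset.disjoint_right]
          intro z hz hz'
          rw [mem_shiftT hcol'] at hz
          have hv2 := mem_Vt.1 hz'
          rcases hcovIn z.1 (z.2 + k) hv2.2.1 hv2.2.2 (by omega) t' ht' hz with
            ⟨hx, rfl⟩ | ⟨hx, rfl⟩
          · omega
          · have := hcol' (z.1, c) (mem_Ht.2 ⟨rfl, le_rfl, by omega⟩)
            simp only at this
            omega
        · have hne : j ≠ j' := fun h => huv (by rw [h])
          rw [Finset.disjoint_left]
          intro z hz hz'
          have := (mem_Vt.1 hz).1
          have := (mem_Vt.1 hz').1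
          omega
      · ext z
        constructor
        · intro hz
          obtain ⟨u, hu, hzu⟩ := Finset.mem_biUnion.1 hz
          rcases (hmem2 u).1 hu with ⟨t, ht, hcol, rfl⟩ | ⟨j, hj, rfl⟩
          · simp only [id_eq] at hzu
            rw [mem_shiftT hcol] at hzu
            have := tile_subset_grid hT.2.2 ht hzu
            rw [mem_grid] at this
            simp only at this
            exact mem_grid.2 ⟨this.1, by omega⟩
          · have := mem_Vt.1 hzu
            exact mem_grid.2 ⟨by omega, by omega⟩
        · intro hz
          rw [mem_grid] at hz
          have hw : ((z.1, z.2 + k) : ℕ × ℕ) ∈ grid m (k * (l + 1 + 1)) :=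
            mem_grid.2 ⟨hz.1, by omega⟩
          obtain ⟨t, ht, hwt⟩ := exists_tile hT.2.2 hw
          by_cases hcol : ∀ y ∈ t, k ≤ y.2
          · refine Finset.mem_biUnion.2 ⟨shiftT k t, (hmem2 _).2 (Or.inl ⟨t, ht, hcol, rfl⟩), ?_⟩
            simp only [id_eq]
            rw [mem_shiftT hcol]
            exact hwt
          · push_neg at hcol
            obtain ⟨y, hyt, hyk⟩ := hcol
            rcases hrem t ht ⟨y, hyt, hyk⟩ with ⟨ρ, _, _, rfl⟩ | ⟨x, hx, rfl⟩ |
              ⟨ρ, hρ1, hρ2, rfl⟩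
            · have := mem_Ht.1 hwt; simp only at this; omega
            · have := mem_Vt.1 hwt; simp only at this; omega
            · have hm := mem_Ht.1 hwt
              simp only at hm
              have hzc : z.2 < c := by omega
              refine Finset.mem_biUnion.2 ⟨Vt k i0 z.2,
                (hmem2 _).2 (Or.inr ⟨z.2, hzc, rfl⟩), ?_⟩
              exact mem_Vt.2 ⟨rfl, by omega, by omega⟩
    have hFF2 : FaultFree (k * (l + 1)) T2 := by
      intro a ha0 han
      rcases Nat.lt_or_ge a k with hak | hak
      · obtain ⟨ρ1, hρ1m, hρ1out⟩ := exists_outside_row h1 hi0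
        have hHk : Ht k ρ1 k ∈ T' := by
          have hzg : ((ρ1, k) : ℕ × ℕ) ∈ grid m (k * (l + 1 + 1)) :=
            mem_grid.2 ⟨hρ1m, by omega⟩
          obtain ⟨t, ht, hzt⟩ := exists_tile hT.2.2 hzg
          rcases hT.1 t ht with ⟨i, x, rfl⟩ | ⟨i, x, rfl⟩
          · have hm := mem_Ht.1 hzt
            simp only at hm
            obtain ⟨rfl, hx1, hx2⟩ := hm
            rcases Nat.lt_or_ge x k with hxk | hxk
            · exfalso
              have := hcovOut ρ1 x hρ1m hρ1out hxk _ ht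
                (mem_Ht.2 ⟨rfl, le_rfl, by omega⟩)
              have := (Ht_inj hk0 this).2
              omega
            · have : x = k := by omega
              subst this; exact ht
          · exfalso
            have hm := mem_Vt.1 hzt
            simp only at hm
            obtain ⟨rfl, _, _⟩ := hm
            have hmid : ((k - 1, k) : ℕ × ℕ) ∈ Vt k i k :=
              Vt_mem_middle hT.2.2 hk0 h2 ht
            rcases hcovIn (k - 1) k (by omega) (by omega) (by omega) _ ht hmid with
              ⟨hx, _⟩ | ⟨_, heq⟩
            · omega
            · exact Ht_ne_Vt hk (k - 1) c i k heq.symm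
        have hcolHk : ∀ z ∈ Ht k ρ1 k, k ≤ z.2 := fun z hz => by
          have := mem_Ht.1 hz; omega
        have hmem : shiftT k (Ht k ρ1 k) ∈ T2 :=
          (hmem2 _).2 (Or.inl ⟨_, hHk, hcolHk, rfl⟩)
        rw [shiftT_Ht le_rfl, Nat.sub_self] at hmem
        exact not_fault_of_crossing hmem
          ⟨(ρ1, k - 1), mem_Ht.2 ⟨rfl, by omega, by omega⟩, by omega⟩
          ⟨(ρ1, 0), mem_Ht.2 ⟨rfl, le_rfl, by omega⟩, by omega⟩
      · obtain ⟨t, ht, ⟨z1, hz1, hz1'⟩, ⟨z2, hz2, hz2'⟩⟩ :=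
          ff_crossing hFF (a := a + k) (by omega) (by omega)
        have hcol : ∀ z ∈ t, k ≤ z.2 := by
          by_contra hc
          push_neg at hc
          obtain ⟨y, hyt, hyk⟩ := hc
          rcases hrem t ht ⟨y, hyt, hyk⟩ with ⟨ρ, _, _, rfl⟩ | ⟨x, hx, rfl⟩ |
            ⟨ρ, _, _, rfl⟩
          · have := mem_Ht.1 hz1; omega
          · have e1 := mem_Vt.1 hz1
            have e2 := mem_Vt.1 hz2
            omega
          · have := mem_Ht.1 hz1; omega
        refine not_fault_of_crossing ((hmem2 _).2 (Or.inl ⟨t, ht, hcol, rfl⟩))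
          ⟨(z1.1, z1.2 - k), ?_, ?_⟩ ⟨(z2.1, z2.2 - k), ?_, ?_⟩
        · rw [mem_shiftT hcol]
          have h1' := hcol z1 hz1
          have : ((z1.1, z1.2 - k + k) : ℕ × ℕ) = z1 := by ext <;> simp <;> omega
          simp only
          rw [this]
          exact hz1
        · simp only
          have := hcol z1 hz1
          omega
        · rw [mem_shiftT hcol]
          have h2' := hcol z2 hz2
          have : ((z2.1, z2.2 - k + k) : ℕ × ℕ) = z2 := by ext <;> simp <;> omega
          simp only
          rw [this]
          exact hz2
        · simp only
          have := hcol z2 hz2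
          omega
    have hV02 : Vt k i0 0 ∈ T2 := (hmem2 _).2 (Or.inr ⟨0, hc0, rfl⟩)
    obtain ⟨hcard2, hdisj2⟩ := ih T2 hT2til hFF2 ⟨i0, hV02⟩
    -- blocks of T2 have column ≥ c
    have hcolge : ∀ p ∈ blockPos k m (k * (l + 1)) T2, c ≤ p.2 := by
      rintro ⟨i, j⟩ hp
      rw [mem_blockPos] at hp
      obtain ⟨hpg, hprows⟩ := hp
      simp only at hprows ⊢
      have hik : i + k ≤ m := by
        have := (Ht_col_bound hT2til.2.2 hk0 (hprows (k - 1) (by omega))).1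
        omega
      set ρ := max i i0 with hρdef
      have hρ1 : i ≤ ρ := le_max_left _ _
      have hρ2 : i0 ≤ ρ := le_max_right _ _
      have hρ3 : ρ < i + k := by omega
      have hρ4 : ρ < i0 + k := by omega
      have hHρ : Ht k ρ j ∈ T2 := by
        have := hprows (ρ - i) (by omega)
        rwa [Nat.add_sub_cancel' hρ1] at this
      rcases (hmem2 _).1 hHρ with ⟨t, ht, hcol, heq⟩ | ⟨x, hx, heq⟩
      · have hteq : t = Ht k ρ (j + k) := shiftT_eq_Ht hcol heq.symm
        subst hteq
        by_contra hlt
        rcases hcovIn ρ (j + k) hρ2 hρ4 (by omega) _ ht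
            (mem_Ht.2 ⟨rfl, le_rfl, by omega⟩) with ⟨hx', heq'⟩ | ⟨hx', heq'⟩
        · exact Ht_ne_Vt hk ρ (j + k) i0 (j + k) heq'
        · have := (Ht_inj hk0 heq').2
          omega
      · exact absurd heq (Ht_ne_Vt hk ρ j i0 x)
    -- correspondence of block positions
    have hBP : blockPos k m (k * (l + 1 + 1)) T' =
        insert ((i0, c) : ℕ × ℕ)
          ((blockPos k m (k * (l + 1)) T2).image fun p => (p.1, p.2 + k)) := by
      ext ⟨i, j⟩
      rw [Finset.mem_insert, Finset.mem_image, mem_blockPos]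
      constructor
      · rintro ⟨hg, hrows⟩
        rw [mem_grid] at hg
        simp only at hg hrows ⊢
        have hik : i + k ≤ m := by
          have := (Ht_col_bound hT.2.2 hk0 (hrows (k - 1) (by omega))).1
          omega
        set ρ := max i i0 with hρdef
        have hρ1 : i ≤ ρ := le_max_left _ _
        have hρ2 : i0 ≤ ρ := le_max_right _ _
        have hρ3 : ρ < i + k := by omega
        have hρ4 : ρ < i0 + k := by omega
        have hHρ : Ht k ρ j ∈ T' := by
          have := hrows (ρ - i) (by omega)
          rwa [Nat.add_sub_cancel' hρ1] at this
        by_cases hj : j < c + k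
        · left
          rcases hcovIn ρ j hρ2 hρ4 hj _ hHρ (mem_Ht.2 ⟨rfl, le_rfl, by omega⟩) with
            ⟨hx, heq⟩ | ⟨hx, heq⟩
          · exact absurd heq (Ht_ne_Vt hk ρ j i0 j)
          · have hjc : j = c := (Ht_inj hk0 heq).2
            have hAll : ∀ s, s < k → i0 ≤ i + s ∧ i + s < i0 + k := by
              intro s hs
              by_contra hout
              have houtr : i + s < i0 ∨ i0 + k ≤ i + s := by omega
              have h5 := hcovOut (i + s) j (by omega) houtr (by omega) _ (hrows s hs)
                (mem_Ht.2 ⟨rfl, le_rfl, by omega⟩)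
              have := (Ht_inj hk0 h5).2
              omega
            have h0 := hAll 0 (by omega)
            have hk1 := hAll (k - 1) (by omega)
            have hii : i = i0 := by omega
            simp [hii, hjc]
        · right
          refine ⟨(i, j - k), ?_, by simp; omega⟩
          rw [mem_blockPos]
          refine ⟨mem_grid.2 ⟨hg.1, by omega⟩, fun s hs => ?_⟩
          simp only
          have hcolt : ∀ z ∈ Ht k (i + s) j, k ≤ z.2 := fun z hz => by
            have := mem_Ht.1 hz; omega
          have hsh : shiftT k (Ht k (i + s) j) = Ht k (i + s) (j - k) :=
            shiftT_Ht (by omega)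
          rw [← hsh]
          exact (hmem2 _).2 (Or.inl ⟨_, hrows s hs, hcolt, rfl⟩)
      · rintro (heq | ⟨⟨pi, pj⟩, hp, heq⟩)
        · simp only [Prod.mk.injEq] at heq
          refine ⟨mem_grid.2 ⟨by omega, by omega⟩, fun s hs => ?_⟩
          rw [heq.1, heq.2]
          exact hB (i0 + s) (by omega) (by omega)
        · rw [mem_blockPos] at hp
          obtain ⟨hpg, hprows⟩ := hp
          rw [mem_grid] at hpg
          simp only [Prod.mk.injEq] at heq hpg hprows
          obtain ⟨rfl, rfl⟩ := heq
          refine ⟨mem_grid.2 ⟨hpg.1, by omega⟩, fun s hs => ?_⟩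
          have hmem := hprows s hs
          rcases (hmem2 _).1 hmem with ⟨t, ht, hcol, heq2⟩ | ⟨x, hx, heq2⟩
          · have hteq : t = Ht k (pi + s) (pj + k) := shiftT_eq_Ht hcol heq2.symm
            rw [← hteq]
            exact ht
          · exact absurd heq2 (Ht_ne_Vt hk (pi + s) pj i0 x)
    constructor
    · rw [hBP, Finset.card_insert_of_notMem, Finset.card_image_of_injective _
        (fun p q h => by
          simp only [Prod.mk.injEq] at h
          exact Prod.ext h.1 (by omega)), hcard2]
      rw [Finset.mem_image]
      rintro ⟨⟨pi, pj⟩, hp, heq⟩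
      simp only [Prod.mk.injEq] at heq
      omega
    · intro p hp q hq hne
      rw [hBP, Finset.mem_insert, Finset.mem_image] at hp hq
      rcases hp with rfl | ⟨⟨pi, pj⟩, hp2, rfl⟩ <;>
        rcases hq with rfl | ⟨⟨qi, qj⟩, hq2, rfl⟩
      · exact absurd rfl hne
      · have := hcolge _ hq2
        simp only at this ⊢
        omega
      · have := hcolge _ hp2
        simp only at this ⊢
        omega
      · have hne2 : ((pi, pj) : ℕ × ℕ) ≠ (qi, qj) := by
          intro h
          simp only [Prod.mk.injEq] at h
          exact hne (by simp [h.1, h.2])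
        have := hdisj2 _ hp2 _ hq2 hne2
        simp only at this ⊢
        omega
section PsiLemmas
variable {k : ℕ}

lemma mem_psi {T : Finset (Finset (ℕ × ℕ))} {u : Finset (ℕ × ℕ)} :
    u ∈ psi k T ↔ ∃ t ∈ T,
      (IsSqTile k t ∧ u ∈ (t.image Prod.fst).image fun i => t.filter fun c => c.1 = i) ∨
      (¬ IsSqTile k t ∧ u = t) := by
  unfold psi
  rw [Finset.mem_biUnion]
  constructor
  · rintro ⟨t, ht, hu⟩
    refine ⟨t, ht, ?_⟩
    by_cases h : IsSqTile k t
    · rw [if_pos h] at hu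
      refine Or.inl ⟨h, ?_⟩
      simpa [Finset.filter_congr_decidable] using hu
    · rw [if_neg h] at hu
      exact Or.inr ⟨h, by simpa using hu⟩
  · rintro ⟨t, ht, hcase⟩
    refine ⟨t, ht, ?_⟩
    rcases hcase with ⟨h, hu⟩ | ⟨h, rfl⟩
    · rw [if_pos h]
      simpa [Finset.filter_congr_decidable] using hu
    · rw [if_neg h]
      exact Finset.mem_singleton_self _

lemma Qt_rows_image (hk0 : 0 < k) (i j : ℕ) :
    ((Qt k i j).image Prod.fst).image (fun r => (Qt k i j).filter fun c => c.1 = r) =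
      (Finset.range k).image fun s => Ht k (i + s) j := by
  have h1 : (Qt k i j).image Prod.fst = (Finset.range k).image fun s => i + s := by
    ext a
    simp only [Finset.mem_image, Finset.mem_range]
    constructor
    · rintro ⟨z, hz, rfl⟩
      have := mem_Qt.1 hz
      exact ⟨z.1 - i, by omega, by omega⟩
    · rintro ⟨s, hs, rfl⟩
      exact ⟨(i + s, j), mem_Qt.2 ⟨⟨by omega, by omega⟩, by omega, by omega⟩, rfl⟩
  rw [h1, Finset.image_image]
  refine Finset.image_congr ?_
  intro s hs
  rw [Finset.mem_coe, Finset.mem_range] at hs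
  ext z
  simp only [Function.comp_apply, Finset.mem_filter, mem_Qt, mem_Ht]
  omega

lemma mem_psi_cases {T : Finset (Finset (ℕ × ℕ))} {u : Finset (ℕ × ℕ)} (hk0 : 0 < k)
    (hu : u ∈ psi k T) : ∃ t ∈ T,
      (∃ i j s, s < k ∧ t = Qt k i j ∧ u = Ht k (i + s) j) ∨ (¬ IsSqTile k t ∧ u = t) := by
  obtain ⟨t, ht, hcase⟩ := mem_psi.1 hu
  refine ⟨t, ht, ?_⟩
  rcases hcase with ⟨h, hu2⟩ | h
  · obtain ⟨i, j, rfl⟩ : ∃ i j, t = Qt k i j := h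
    rw [Qt_rows_image hk0] at hu2
    obtain ⟨s, hs, rfl⟩ := Finset.mem_image.1 hu2
    exact Or.inl ⟨i, j, s, Finset.mem_range.1 hs, rfl, rfl⟩
  · exact Or.inr h

lemma Ht_mem_psi {T : Finset (Finset (ℕ × ℕ))} {i j s : ℕ} (hk0 : 0 < k)
    (ht : Qt k i j ∈ T) (hs : s < k) : Ht k (i + s) j ∈ psi k T := by
  refine mem_psi.2 ⟨Qt k i j, ht, Or.inl ⟨⟨i, j, rfl⟩, ?_⟩⟩
  rw [Qt_rows_image hk0]
  exact Finset.mem_image.2 ⟨s, Finset.mem_range.2 hs, rfl⟩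

lemma mem_psi_of_nonsq {T : Finset (Finset (ℕ × ℕ))} {t : Finset (ℕ × ℕ)}
    (ht : t ∈ T) (h : ¬ IsSqTile k t) : t ∈ psi k T :=
  mem_psi.2 ⟨t, ht, Or.inr ⟨h, rfl⟩⟩

lemma part1 {m n : ℕ} (hk : 2 ≤ k) {T : Finset (Finset (ℕ × ℕ))}
    (hT : IsTiling' m n k T) (hFF : FaultFree n T) :
    IsTiling m n k (psi k T) ∧ FaultFree n (psi k T) := by
  have hk0 : 0 < k := by omega
  refine ⟨⟨?_, ?_, ?_⟩, ?_⟩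
  · intro u hu
    obtain ⟨t, ht, hcase⟩ := mem_psi_cases hk0 hu
    rcases hcase with ⟨i, j, s, hs, rfl, rfl⟩ | ⟨hns, rfl⟩
    · exact Or.inl ⟨i + s, j, rfl⟩
    · rcases hT.1 u ht with h | h | h
      · exact Or.inl h
      · exact Or.inr h
      · exact absurd h hns
  · intro u hu v hv huv
    simp only [Function.onFun, id] at *
    rw [Finset.mem_coe] at hu hv
    obtain ⟨t, ht, hcase⟩ := mem_psi_cases hk0 hu
    obtain ⟨t', ht', hcase'⟩ := mem_psi_cases hk0 hv
    by_cases htt : t = t'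
    · subst htt
      rcases hcase with ⟨i, j, s, hs, rfl, rfl⟩ | ⟨hns, rfl⟩ <;>
        rcases hcase' with ⟨i', j', s', hs', heq', rfl⟩ | ⟨hns', rfl⟩
      · have hij := Qt_inj hk0 heq'
        obtain ⟨rfl, rfl⟩ : i = i' ∧ j = j' := hij
        have hss : s ≠ s' := by
          intro h; exact huv (by rw [h])
        rw [Finset.disjoint_left]
        intro z hz hz'
        have := (mem_Ht.1 hz).1
        have := (mem_Ht.1 hz').1
        omega
      · exact absurd ⟨i, j, rfl⟩ hns'
      · exact absurd ⟨i', j', heq'⟩ hns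
      · exact absurd rfl huv
    · have hdisj : Disjoint t t' := hT.2.1 ht ht' htt
      have hsub : u ⊆ t := by
        rcases hcase with ⟨i, j, s, hs, rfl, rfl⟩ | ⟨_, rfl⟩
        · exact Ht_subset_Qt hs
        · exact subset_rfl
      have hsub' : v ⊆ t' := by
        rcases hcase' with ⟨i, j, s, hs, rfl, rfl⟩ | ⟨_, rfl⟩
        · exact Ht_subset_Qt hs
        · exact subset_rfl
      exact Finset.disjoint_of_subset_left hsub (Finset.disjoint_of_subset_right hsub' hdisj)
  · ext z
    constructor
    · intro hz
      obtain ⟨u, hu, hzu⟩ := Finset.mem_biUnion.1 hz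
      simp only [id_eq] at hzu
      obtain ⟨t, ht, hcase⟩ := mem_psi_cases hk0 hu
      have hsub : u ⊆ t := by
        rcases hcase with ⟨i, j, s, hs, rfl, rfl⟩ | ⟨_, rfl⟩
        · exact Ht_subset_Qt hs
        · exact subset_rfl
      exact tile_subset_grid hT.2.2 ht (hsub hzu)
    · intro hz
      obtain ⟨t, ht, hzt⟩ := exists_tile hT.2.2 hz
      by_cases hsq : IsSqTile k t
      · obtain ⟨i, j, rfl⟩ : ∃ i j, t = Qt k i j := hsq
        have hq := mem_Qt.1 hzt
        refine Finset.mem_biUnion.2 ⟨Ht k (i + (z.1 - i)) j,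
          Ht_mem_psi hk0 ht (by omega), ?_⟩
        simp only [id_eq]
        exact mem_Ht.2 ⟨by omega, by omega, by omega⟩
      · exact Finset.mem_biUnion.2 ⟨t, mem_psi_of_nonsq ht hsq, hzt⟩
  · intro a ha0 han hfault
    refine hFF a ha0 han ?_
    intro t ht
    by_cases hsq : IsSqTile k t
    · obtain ⟨i, j, rfl⟩ := hsq
      have hmem : Ht k (i + 0) j ∈ psi k T := Ht_mem_psi hk0 ht hk0
      rcases hfault _ hmem with h | h
      · left
        intro z hz
        have h1 := h (i + 0, j + (k - 1)) (mem_Ht.2 ⟨rfl, by omega, by omega⟩)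
        have h2 := mem_Qt.1 hz
        simp only at h1
        omega
      · right
        intro z hz
        have h1 := h (i + 0, j) (mem_Ht.2 ⟨rfl, le_rfl, by omega⟩)
        have h2 := mem_Qt.1 hz
        simp only at h1
        omega
    · rcases hfault t (mem_psi_of_nonsq ht hsq) with h | h
      · exact Or.inl h
      · exact Or.inr h

end PsiLemmas
section Fiber
variable {k m n : ℕ}

/-- replace the blocks in `B` by square tiles -/
def TB (k : ℕ) (T' : Finset (Finset (ℕ × ℕ))) (B : Finset (ℕ × ℕ)) :
    Finset (Finset (ℕ × ℕ)) :=
  (T' \ B.biUnion fun p => (Finset.range k).image fun s => Ht k (p.1 + s) p.2) ∪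
    B.image fun p => Qt k p.1 p.2

lemma mem_TB {T' : Finset (Finset (ℕ × ℕ))} {B : Finset (ℕ × ℕ)} {u : Finset (ℕ × ℕ)} :
    u ∈ TB k T' B ↔
      (u ∈ T' ∧ ¬ ∃ p ∈ B, ∃ s < k, u = Ht k (p.1 + s) p.2) ∨
      ∃ p ∈ B, u = Qt k p.1 p.2 := by
  simp only [TB, Finset.mem_union, Finset.mem_sdiff, Finset.mem_biUnion, Finset.mem_image,
    Finset.mem_range]
  constructor
  · rintro (⟨h1, h2⟩ | ⟨p, hp, rfl⟩)
    · refine Or.inl ⟨h1, fun ⟨p, hp, s, hs, heq⟩ => h2 ⟨p, hp, s, hs, heq.symm⟩⟩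
    · exact Or.inr ⟨p, hp, rfl⟩
  · rintro (⟨h1, h2⟩ | ⟨p, hp, rfl⟩)
    · exact Or.inl ⟨h1, fun ⟨p, hp, s, hs, heq⟩ => h2 ⟨p, hp, s, hs, heq.symm⟩⟩
    · exact Or.inr ⟨p, hp, rfl⟩

lemma nonsq_of_card (hk : 2 ≤ k) {u : Finset (ℕ × ℕ)} (hc : u.card = k) :
    ¬ IsSqTile k u := by
  rintro h
  obtain ⟨i, j, rfl⟩ : ∃ i j, u = Qt k i j := h
  rw [card_Qt] at hc
  have : 2 * k ≤ k * k := Nat.mul_le_mul_right k hk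
  omega

lemma fiber_count (hk : 2 ≤ k) {T' : Finset (Finset (ℕ × ℕ))}
    (hT' : IsTiling m n k T') (hFF : FaultFree n T')
    (hdisjBP : ∀ p ∈ blockPos k m n T', ∀ q ∈ blockPos k m n T', p ≠ q →
      p.2 + k ≤ q.2 ∨ q.2 + k ≤ p.2) :
    Nat.card {T : Finset (Finset (ℕ × ℕ)) // IsTiling' m n k T ∧ FaultFree n T ∧
      psi k T = T'} = 2 ^ (blockPos k m n T').card := by
  have hk0 : 0 < k := by omega
  have hnonsq : ∀ u ∈ T', ¬ IsSqTile k u := fun u hu =>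
    nonsq_of_card hk (card_tile hT' hu)
  have hQnotin : ∀ i j, Qt k i j ∉ T' := fun i j h => hnonsq _ h ⟨i, j, rfl⟩
  have hrowmem : ∀ p ∈ blockPos k m n T', ∀ s, s < k → Ht k (p.1 + s) p.2 ∈ T' := by
    intro p hp s hs
    exact (mem_blockPos.1 hp).2 s hs
  -- (L1) TB is a tiling'
  have hL1 : ∀ B ⊆ blockPos k m n T', IsTiling' m n k (TB k T' B) := by
    intro B hB
    refine ⟨?_, ?_, ?_⟩
    · intro u hu
      rcases mem_TB.1 hu with ⟨h1, _⟩ | ⟨p, hp, rfl⟩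
      · rcases hT'.1 u h1 with h | h
        · exact Or.inl h
        · exact Or.inr (Or.inl h)
      · exact Or.inr (Or.inr ⟨p.1, p.2, rfl⟩)
    · intro u hu v hv huv
      simp only [Function.onFun, id] at *
      rw [Finset.mem_coe] at hu hv
      have key : ∀ {w x : Finset (ℕ × ℕ)}, w ∈ TB k T' B → x ∈ TB k T' B →
          (w ∈ T' ∧ ¬ ∃ p ∈ B, ∃ s < k, w = Ht k (p.1 + s) p.2) →
          (∃ p ∈ B, x = Qt k p.1 p.2) → Disjoint w x := by
        rintro w x hw hx ⟨hw1, hw2⟩ ⟨q, hq, rfl⟩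
        rw [Finset.disjoint_left]
        intro z hzw hzq
        have hzq' := mem_Qt.1 hzq
        have hzH : z ∈ Ht k (q.1 + (z.1 - q.1)) q.2 :=
          mem_Ht.2 ⟨by omega, by omega, by omega⟩
        have hHT : Ht k (q.1 + (z.1 - q.1)) q.2 ∈ T' := hrowmem q (hB hq) _ (by omega)
        have := uniq_tile hT'.2.1 hw1 hHT hzw hzH
        exact hw2 ⟨q, hq, z.1 - q.1, by omega, this⟩
      rcases mem_TB.1 hu with h | h <;> rcases mem_TB.1 hv with h' | h'
      · exact hT'.2.1 h.1 h'.1 huv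
      · exact key hu hv h h'
      · exact (key hv hu h' h).symm
      · obtain ⟨p, hp, rfl⟩ := h
        obtain ⟨q, hq, rfl⟩ := h'
        have hpq : p ≠ q := by
          intro h; exact huv (by rw [h])
        have := hdisjBP p (hB hp) q (hB hq) hpq
        rw [Finset.disjoint_left]
        intro z hz hz'
        have := mem_Qt.1 hz
        have := mem_Qt.1 hz'
        omega
    · ext z
      constructor
      · intro hz
        obtain ⟨u, hu, hzu⟩ := Finset.mem_biUnion.1 hz
        simp only [id_eq] at hzu
        rcases mem_TB.1 hu with ⟨h1, _⟩ | ⟨p, hp, rfl⟩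
        · exact tile_subset_grid hT'.2.2 h1 hzu
        · have hzq := mem_Qt.1 hzu
          have hzH : z ∈ Ht k (p.1 + (z.1 - p.1)) p.2 :=
            mem_Ht.2 ⟨by omega, by omega, by omega⟩
          exact tile_subset_grid hT'.2.2 (hrowmem p (hB hp) _ (by omega)) hzH
      · intro hz
        obtain ⟨t, ht, hzt⟩ := exists_tile hT'.2.2 hz
        by_cases hR : ∃ p ∈ B, ∃ s < k, t = Ht k (p.1 + s) p.2
        · obtain ⟨p, hp, s, hs, rfl⟩ := hR
          refine Finset.mem_biUnion.2 ⟨Qt k p.1 p.2, mem_TB.2 (Or.inr ⟨p, hp, rfl⟩), ?_⟩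
          simp only [id_eq]
          exact Ht_subset_Qt hs hzt
        · exact Finset.mem_biUnion.2 ⟨t, mem_TB.2 (Or.inl ⟨ht, hR⟩), hzt⟩
  -- (L2) TB is fault-free
  have hL2 : ∀ B ⊆ blockPos k m n T', FaultFree n (TB k T' B) := by
    intro B hB a ha0 han hfault
    refine hFF a ha0 han ?_
    intro t ht
    by_cases hR : ∃ p ∈ B, ∃ s < k, t = Ht k (p.1 + s) p.2
    · obtain ⟨p, hp, s, hs, rfl⟩ := hR
      rcases hfault _ (mem_TB.2 (Or.inr ⟨p, hp, rfl⟩)) with h | h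
      · exact Or.inl fun z hz => h z (Ht_subset_Qt hs hz)
      · exact Or.inr fun z hz => h z (Ht_subset_Qt hs hz)
    · exact hfault t (mem_TB.2 (Or.inl ⟨ht, hR⟩))
  -- (L3) psi of TB is T'
  have hL3 : ∀ B ⊆ blockPos k m n T', psi k (TB k T' B) = T' := by
    intro B hB
    ext u
    constructor
    · intro hu
      obtain ⟨t, ht, hcase⟩ := mem_psi_cases hk0 hu
      rcases hcase with ⟨i, j, s, hs, rfl, rfl⟩ | ⟨hns, rfl⟩
      · rcases mem_TB.1 ht with ⟨h1, _⟩ | ⟨q, hq, heq⟩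
        · exact absurd ⟨i, j, rfl⟩ (hnonsq _ h1)
        · obtain ⟨rfl, rfl⟩ : q.1 = i ∧ q.2 = j := Qt_inj hk0 heq.symm
          exact hrowmem q (hB hq) s hs
      · rcases mem_TB.1 ht with ⟨h1, _⟩ | ⟨q, hq, rfl⟩
        · exact h1
        · exact absurd ⟨q.1, q.2, rfl⟩ hns
    · intro hu
      by_cases hR : ∃ p ∈ B, ∃ s < k, u = Ht k (p.1 + s) p.2
      · obtain ⟨p, hp, s, hs, rfl⟩ := hR
        exact Ht_mem_psi hk0 (mem_TB.2 (Or.inr ⟨p, hp, rfl⟩)) hs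
      · exact mem_psi_of_nonsq (mem_TB.2 (Or.inl ⟨hu, hR⟩)) (hnonsq u hu)
  -- (L4) injectivity
  have hL4 : ∀ B ⊆ blockPos k m n T', ∀ B' ⊆ blockPos k m n T',
      TB k T' B = TB k T' B' → B ⊆ B' := by
    intro B hB B' hB' heq p hp
    have h1 : Qt k p.1 p.2 ∈ TB k T' B' := heq ▸ mem_TB.2 (Or.inr ⟨p, hp, rfl⟩)
    rcases mem_TB.1 h1 with ⟨h2, _⟩ | ⟨q, hq, heq2⟩
    · exact absurd h2 (hQnotin _ _)
    · obtain ⟨h3, h4⟩ : q.1 = p.1 ∧ q.2 = p.2 := Qt_inj hk0 heq2.symm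
      have : q = p := Prod.ext h3 h4
      rwa [← this]
  -- (L5) every fiber element is of the form TB B
  have hL5 : ∀ T : Finset (Finset (ℕ × ℕ)), IsTiling' m n k T → FaultFree n T →
      psi k T = T' → ∃ B ⊆ blockPos k m n T', T = TB k T' B := by
    intro T hT hFFT hpsi
    refine ⟨(blockPos k m n T').filter fun p => Qt k p.1 p.2 ∈ T,
      Finset.filter_subset _ _, ?_⟩
    have hBmem : ∀ i j, Qt k i j ∈ T → ((i, j) : ℕ × ℕ) ∈
        (blockPos k m n T').filter fun p => Qt k p.1 p.2 ∈ T := by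
      intro i j hq
      rw [Finset.mem_filter]
      refine ⟨mem_blockPos.2 ⟨?_, fun s hs => ?_⟩, hq⟩
      · exact tile_subset_grid hT.2.2 hq
          (mem_Qt.2 ⟨⟨le_rfl, by omega⟩, le_rfl, by omega⟩)
      · rw [← hpsi]
        exact Ht_mem_psi hk0 hq hs
    ext u
    constructor
    · intro hu
      by_cases hsq : IsSqTile k u
      · obtain ⟨i, j, rfl⟩ : ∃ i j, u = Qt k i j := hsq
        exact mem_TB.2 (Or.inr ⟨(i, j), hBmem i j hu, rfl⟩)
      · refine mem_TB.2 (Or.inl ⟨by rw [← hpsi]; exact mem_psi_of_nonsq hu hsq, ?_⟩)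
        rintro ⟨p, hp, s, hs, rfl⟩
        have hqT : Qt k p.1 p.2 ∈ T := (Finset.mem_filter.1 hp).2
        have hne : Ht k (p.1 + s) p.2 ≠ Qt k p.1 p.2 :=
          fun h => Qt_ne_Ht hk p.1 p.2 (p.1 + s) p.2 h.symm
        have hz1 : ((p.1 + s, p.2) : ℕ × ℕ) ∈ Ht k (p.1 + s) p.2 :=
          mem_Ht.2 ⟨rfl, le_rfl, by omega⟩
        have hz2 : ((p.1 + s, p.2) : ℕ × ℕ) ∈ Qt k p.1 p.2 :=
          mem_Qt.2 ⟨⟨by omega, by omega⟩, le_rfl, by omega⟩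
        exact hne (uniq_tile hT.2.1 hu hqT hz1 hz2)
    · intro hu
      rcases mem_TB.1 hu with ⟨h1, h2⟩ | ⟨q, hq, rfl⟩
      · rw [← hpsi] at h1
        obtain ⟨t, ht, hcase⟩ := mem_psi_cases hk0 h1
        rcases hcase with ⟨i, j, s, hs, rfl, rfl⟩ | ⟨_, rfl⟩
        · exact absurd ⟨(i, j), hBmem i j ht, s, hs, rfl⟩ h2
        · exact ht
      · exact (Finset.mem_filter.1 hq).2
  -- assemble the count
  have hiff : ∀ T : Finset (Finset (ℕ × ℕ)),
      (IsTiling' m n k T ∧ FaultFree n T ∧ psi k T = T') ↔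
      T ∈ (blockPos k m n T').powerset.image (TB k T') := by
    intro T
    constructor
    · rintro ⟨h1, h2, h3⟩
      obtain ⟨B, hB, rfl⟩ := hL5 T h1 h2 h3
      exact Finset.mem_image.2 ⟨B, Finset.mem_powerset.2 hB, rfl⟩
    · intro h
      obtain ⟨B, hB, rfl⟩ := Finset.mem_image.1 h
      rw [Finset.mem_powerset] at hB
      exact ⟨hL1 B hB, hL2 B hB, hL3 B hB⟩
  rw [Nat.card_congr (Equiv.subtypeEquivRight hiff), Nat.card_eq_fintype_card,
    Fintype.card_coe]
  rw [Finset.card_image_of_injOn, Finset.card_powerset]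
  intro B hB B' hB' heq
  rw [Finset.mem_coe, Finset.mem_powerset] at hB hB'
  exact Finset.Subset.antisymm (hL4 B hB B' hB' heq) (hL4 B' hB' B hB heq.symm)

end Fiber
lemma exists_vert_col0 {k m n : ℕ} (hk : 2 ≤ k) (h2 : m < 2 * k) (hkn : k < n)
    {T' : Finset (Finset (ℕ × ℕ))} (hT' : IsTiling m n k T') (hFF : FaultFree n T') :
    ∃ i0, Vt k i0 0 ∈ T' := by
  have hk0 : 0 < k := by omega
  obtain ⟨i, j, hH, hj1, hj2⟩ := ff_crossing_Ht hT' hFF hk0 (a := k) hk0 hkn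
  have him : i < m := (Ht_col_bound hT'.2.2 hk0 hH).1
  have hz : ((i, 0) : ℕ × ℕ) ∈ grid m n := mem_grid.2 ⟨him, by omega⟩
  obtain ⟨t, ht, hzt⟩ := exists_tile hT'.2.2 hz
  have hHV : (∃ a x, t = Ht k a x) ∨ ∃ a x, t = Vt k a x := hT'.1 t ht
  rcases hHV with ⟨a, x, rfl⟩ | ⟨a, x, rfl⟩
  · exfalso
    have hm := mem_Ht.1 hzt
    simp only at hm
    obtain ⟨rfl, hx1, _⟩ := hm
    have hx0 : x = 0 := by omega
    subst hx0
    have hs1 : ((i, j) : ℕ × ℕ) ∈ Ht k i 0 := mem_Ht.2 ⟨rfl, by omega, by omega⟩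
    have hs2 : ((i, j) : ℕ × ℕ) ∈ Ht k i j := mem_Ht.2 ⟨rfl, le_rfl, by omega⟩
    have := (Ht_inj hk0 (uniq_tile hT'.2.1 ht hH hs1 hs2)).2
    omega
  · have hm := mem_Vt.1 hzt
    simp only at hm
    obtain ⟨rfl, _, _⟩ := hm
    exact ⟨a, ht⟩

lemma psi_eq_self {k : ℕ} (hk0 : 0 < k) {T : Finset (Finset (ℕ × ℕ))}
    (h : ∀ t ∈ T, ¬ IsSqTile k t) : psi k T = T := by
  ext u
  constructor
  · intro hu
    obtain ⟨t, ht, hcase⟩ := mem_psi_cases hk0 hu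
    rcases hcase with ⟨i, j, s, hs, rfl, rfl⟩ | ⟨_, rfl⟩
    · exact absurd ⟨i, j, rfl⟩ (h _ ht)
    · exact ht
  · intro hu
    exact mem_psi_of_nonsq hu (h u hu)

theorem stmt_17 (k m l : ℕ) (hk : 2 ≤ k) (h1 : k < m) (h2 : m < 2 * k) (hl : 1 < l) :
    (∀ T : Finset (Finset (ℕ × ℕ)), IsTiling' m (k * l) k T → FaultFree (k * l) T →
      IsTiling m (k * l) k (psi k T) ∧ FaultFree (k * l) (psi k T)) ∧
    (∀ T' : Finset (Finset (ℕ × ℕ)), IsTiling m (k * l) k T' → FaultFree (k * l) T' →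
      (∃ T : Finset (Finset (ℕ × ℕ)), IsTiling' m (k * l) k T ∧ FaultFree (k * l) T ∧
        psi k T = T') ∧
      Nat.card {T : Finset (Finset (ℕ × ℕ)) // IsTiling' m (k * l) k T ∧
          FaultFree (k * l) T ∧ psi k T = T'} = 2 ^ (l - 1)) := by
  have hk0 : 0 < k := by omega
  constructor
  · intro T hT hFF
    exact part1 hk hT hFF
  · intro T' hT' hFF
    have hkn : k < k * l := by
      have : k * 2 ≤ k * l := Nat.mul_le_mul_left k hl
      omega
    constructor
    · refine ⟨T', ⟨?_, hT'.2.1, hT'.2.2⟩, hFF, ?_⟩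
      · intro t ht
        rcases hT'.1 t ht with h | h
        · exact Or.inl h
        · exact Or.inr (Or.inl h)
      · exact psi_eq_self hk0 fun t ht => nonsq_of_card hk (card_tile hT' ht)
    · have hw : k * (l - 1 + 1) = k * l := by
        congr 1
        omega
      have hst := structure_main k m hk h1 h2 (l - 1) T' (hw ▸ hT') (hw ▸ hFF)
        (exists_vert_col0 hk h2 hkn hT' hFF)
      rw [hw] at hst
      rw [fiber_count hk hT' hFF hst.2, hst.1]
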